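/- Let φ ∈ E satisfy the first law with temperature 𝒯 > 0 and potentials Y_1, …, Y_p, and suppose the continuous linear map E → ℝ^{p+1} given by u ↦ (DM_φ(u), DX^1_φ(u), …, DX^p_φ(u)) is surjective (Condition A). If there exists u ∈ E with DM_φ(u) = DX^1_φ(u) = ⋯ = DX^p_φ(u) = 0 and B_φ(u,u) < 0, then there exists w ∈ E such that the curve γ(t) = φ + t·u + (t²/2)·w satisfies: (M∘γ)′(0) = (S∘γ)′(0) = (X^i∘γ)′(0) = 0 for all i, (M∘γ)″(0) = (X^i∘γ)″(0) = 0 for all i, and (S∘γ)″(0) > 0. That is, φ admits a field variation keeping M and all X^i fixed to first and second order along which the entropy has positive second variation, so φ is thermodynamically unstable. -/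

import Mathlib

open Filter Topology

/-- The second Fréchet derivative of `f : E → ℝ` at `φ`, applied to `u`, `v`. -/
noncomputable def D2 {E : Type*} [NormedAddCommGroup E] [NormedSpace ℝ E]
    (f : E → ℝ) (φ u v : E) : ℝ :=
  fderiv ℝ (fderiv ℝ f) φ u v

/-- `φ` satisfies the first law with temperature `T` and potentials `Y i`:
`DM_φ = T·DS_φ + ∑ i, Y i · DX^i_φ` as continuous linear functionals. -/
def FirstLaw {E : Type*} [NormedAddCommGroup E] [NormedSpace ℝ E] {p : ℕ}
    (M S : E → ℝ) (X : Fin p → E → ℝ) (φ : E) (T : ℝ) (Y : Fin p → ℝ) : Prop :=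
  fderiv ℝ M φ = T • fderiv ℝ S φ + ∑ i, Y i • fderiv ℝ (X i) φ

/-- The canonical bilinear form
`B_φ(u,v) = D²M_φ(u,v) − T·D²S_φ(u,v) − ∑ i, Y i·D²X^i_φ(u,v)`. -/
noncomputable def Bform {E : Type*} [NormedAddCommGroup E] [NormedSpace ℝ E] {p : ℕ}
    (M S : E → ℝ) (X : Fin p → E → ℝ) (φ : E) (T : ℝ) (Y : Fin p → ℝ) (u v : E) : ℝ :=
  D2 M φ u v - T * D2 S φ u v - ∑ i, Y i * D2 (X i) φ u v

/-!
Along `γ(t) = φ + t u + (t²/2) w` a `C²` function `f` has first variation `Df_φ(u)` and second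
variation `D²f_φ(u,u) + Df_φ(w)`. Condition A lets us choose `w` so that the second variations of
`M` and of every `X^i` vanish. Pairing the first law with `w` shows that the combination
`δ²M − T δ²S − ∑ Yᵢ δ²Xⁱ` of second variations equals `B_φ(u,u)`, hence
`T δ²S = −B_φ(u,u) > 0`; pairing it with `u` shows `δS = 0`.
-/

section QuadraticCurve

variable {E : Type*} [NormedAddCommGroup E] [NormedSpace ℝ E]

theorem hasDerivAt_quadratic_curve (φ u w : E) (t : ℝ) :
    HasDerivAt (fun t : ℝ => φ + t • u + (t ^ 2 / 2) • w) (u + t • w) t := by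
  have hlin : HasDerivAt (fun t : ℝ => t • u) u t := by
    simpa using (hasDerivAt_id t).smul_const u
  have hsq : HasDerivAt (fun t : ℝ => t ^ 2 / 2) t t := by
    simpa [mul_comm] using (hasDerivAt_pow 2 t).div_const 2
  have h := ((hasDerivAt_const t φ).add hlin).add (hsq.smul_const w)
  rwa [zero_add] at h

theorem deriv_comp_quadratic_curve {f : E → ℝ} (hf : Differentiable ℝ f) (φ u w : E) :
    deriv (f ∘ fun t : ℝ => φ + t • u + (t ^ 2 / 2) • w) =
      fun t => fderiv ℝ f (φ + t • u + (t ^ 2 / 2) • w) (u + t • w) :=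
  funext fun t =>
    ((hf _).hasFDerivAt.comp_hasDerivAt t (hasDerivAt_quadratic_curve φ u w t)).deriv

theorem deriv_comp_quadratic_curve_zero {f : E → ℝ} (hf : Differentiable ℝ f) (φ u w : E) :
    deriv (f ∘ fun t : ℝ => φ + t • u + (t ^ 2 / 2) • w) 0 = fderiv ℝ f φ u := by
  simp [deriv_comp_quadratic_curve hf]

theorem deriv_deriv_comp_quadratic_curve_zero {f : E → ℝ} (hf : ContDiff ℝ 2 f)
    (φ u w : E) :
    deriv (deriv (f ∘ fun t : ℝ => φ + t • u + (t ^ 2 / 2) • w)) 0 =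
      D2 f φ u u + fderiv ℝ f φ w := by
  have hDf : Differentiable ℝ (fderiv ℝ f) :=
    (hf.fderiv_right (m := 1) le_rfl).differentiable one_ne_zero
  have hDfγ : HasDerivAt (fun t : ℝ => fderiv ℝ f (φ + t • u + (t ^ 2 / 2) • w))
      (fderiv ℝ (fderiv ℝ f) φ u) 0 := by
    have h := (hDf _).hasFDerivAt.comp_hasDerivAt 0 (hasDerivAt_quadratic_curve φ u w 0)
    simp only [zero_smul, add_zero, zero_pow two_ne_zero, zero_div] at h
    exact h
  have hvel : HasDerivAt (fun t : ℝ => u + t • w) w 0 := by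
    simpa using ((hasDerivAt_id (0 : ℝ)).smul_const w).const_add u
  rw [deriv_comp_quadratic_curve (hf.differentiable two_ne_zero)]
  simpa [D2] using (hDfγ.clm_apply hvel).deriv

end QuadraticCurve

namespace FirstLaw

variable {E : Type*} [NormedAddCommGroup E] [NormedSpace ℝ E] {p : ℕ}
  {M S : E → ℝ} {X : Fin p → E → ℝ} {φ : E} {T : ℝ} {Y : Fin p → ℝ}

theorem apply (h : FirstLaw M S X φ T Y) (v : E) :
    fderiv ℝ M φ v = T * fderiv ℝ S φ v + ∑ i, Y i * fderiv ℝ (X i) φ v := by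
  simp [congrArg (fun L : E →L[ℝ] ℝ => L v) h]

theorem fderiv_entropy_eq_zero (h : FirstLaw M S X φ T Y) (hT : T ≠ 0) {u : E}
    (hMu : fderiv ℝ M φ u = 0) (hXu : ∀ i, fderiv ℝ (X i) φ u = 0) :
    fderiv ℝ S φ u = 0 := by
  have := h.apply u
  simp only [hMu, hXu, mul_zero, Finset.sum_const_zero, add_zero] at this
  exact (mul_eq_zero.mp this.symm).resolve_left hT

theorem secondVariation_sub_eq_Bform (h : FirstLaw M S X φ T Y) (u w : E) :
    (D2 M φ u u + fderiv ℝ M φ w) - T * (D2 S φ u u + fderiv ℝ S φ w)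
      - ∑ i, Y i * (D2 (X i) φ u u + fderiv ℝ (X i) φ w) = Bform M S X φ T Y u u := by
  simp only [Bform, h.apply w, mul_add, Finset.sum_add_distrib]
  ring

end FirstLaw

theorem thermodynamic_instability_of_Bform_neg
    {E : Type*} [NormedAddCommGroup E] [NormedSpace ℝ E]
    {p : ℕ} (M S : E → ℝ) (X : Fin p → E → ℝ)
    (hM : ContDiff ℝ (⊤ : ℕ∞) M) (hS : ContDiff ℝ (⊤ : ℕ∞) S)
    (hX : ∀ i, ContDiff ℝ (⊤ : ℕ∞) (X i))
    (φ : E) (T : ℝ) (hT : 0 < T) (Y : Fin p → ℝ) (hfl : FirstLaw M S X φ T Y)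
    (hcondA : Function.Surjective
      (fun u : E => ((fderiv ℝ M φ u, fun i => fderiv ℝ (X i) φ u) : ℝ × (Fin p → ℝ))))
    (u : E) (hMu : fderiv ℝ M φ u = 0) (hXu : ∀ i, fderiv ℝ (X i) φ u = 0)
    (hB : Bform M S X φ T Y u u < 0) :
    ∃ w : E,
      let γ : ℝ → E := fun t => φ + t • u + (t ^ 2 / 2) • w
      deriv (M ∘ γ) 0 = 0 ∧ deriv (S ∘ γ) 0 = 0 ∧ (∀ i, deriv (X i ∘ γ) 0 = 0) ∧
      deriv (deriv (M ∘ γ)) 0 = 0 ∧ (∀ i, deriv (deriv (X i ∘ γ)) 0 = 0) ∧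
      0 < deriv (deriv (S ∘ γ)) 0 := by
  have hM2 : ContDiff ℝ 2 M := hM.of_le (WithTop.coe_le_coe.mpr le_top)
  have hS2 : ContDiff ℝ 2 S := hS.of_le (WithTop.coe_le_coe.mpr le_top)
  have hX2 (i : Fin p) : ContDiff ℝ 2 (X i) := (hX i).of_le (WithTop.coe_le_coe.mpr le_top)
  obtain ⟨w, hw⟩ := hcondA (-D2 M φ u u, fun i => -D2 (X i) φ u u)
  simp only [Prod.mk.injEq, funext_iff] at hw
  have hMw : D2 M φ u u + fderiv ℝ M φ w = 0 := by linarith [hw.1]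
  have hXw (i : Fin p) : D2 (X i) φ u u + fderiv ℝ (X i) φ w = 0 := by linarith [hw.2 i]
  have hSu := hfl.fderiv_entropy_eq_zero hT.ne' hMu hXu
  have hSw : -T * (D2 S φ u u + fderiv ℝ S φ w) = Bform M S X φ T Y u u := by
    simpa [hMw, hXw] using hfl.secondVariation_sub_eq_Bform u w
  refine ⟨w, ?_, ?_, fun i => ?_, ?_, fun i => ?_, ?_⟩
  · rw [deriv_comp_quadratic_curve_zero (hM2.differentiable two_ne_zero), hMu]
  · rw [deriv_comp_quadratic_curve_zero (hS2.differentiable two_ne_zero), hSu]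
  · rw [deriv_comp_quadratic_curve_zero ((hX2 i).differentiable two_ne_zero), hXu i]
  · rw [deriv_deriv_comp_quadratic_curve_zero hM2, hMw]
  · rw [deriv_deriv_comp_quadratic_curve_zero (hX2 i), hXw i]
  · rw [deriv_deriv_comp_quadratic_curve_zero hS2]
    nlinarith
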